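/- For every odd integer n ≥ 3, the limit of g_p(n) as p ↑ 1 equals 2/(n+1); for every even integer n ≥ 2, the limit of g_p(n) as p ↑ 1 equals 0. -/

import Mathlib

open Real Set Filter Topology

noncomputable def lamR (p : ℝ) : ℝ := (1 - p - Real.sqrt ((1 - p) * (3 * p + 1))) / 2
noncomputable def lamPF (p : ℝ) : ℝ := (1 - p + Real.sqrt ((1 - p) * (3 * p + 1))) / 2
noncomputable def evRatio (p : ℝ) : ℝ := lamR p / lamPF p

noncomputable def gFun (p : ℝ) (n : ℕ) : ℝ :=
  ((-1 : ℝ) ^ (n + 1) * |evRatio p| ^ n * (lamPF p / (1 - lamR p)) + lamPF p / (1 - lamPF p)) /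
    ((-1 : ℝ) ^ n * |evRatio p| ^ (n - 1) * (1 / (1 - lamR p)) + 1 / (1 - lamPF p))


noncomputable def wFun (u : ℝ) : ℝ := Real.sqrt (4 - 3*u^2)
noncomputable def lRu (u : ℝ) : ℝ := (u^2 - u * wFun u)/2
noncomputable def lPu (u : ℝ) : ℝ := (u^2 + u * wFun u)/2
noncomputable def aU (u : ℝ) : ℝ := (wFun u - u)/(wFun u + u)

lemma wFun_zero : wFun 0 = 2 := by
  rw [wFun]
  norm_num

lemma lRu_zero : lRu 0 = 0 := by simp [lRu]
lemma lPu_zero : lPu 0 = 0 := by simp [lPu]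
lemma aU_zero : aU 0 = 1 := by simp [aU, wFun_zero]

lemma hw : HasDerivAt wFun 0 0 := by
  have h1 : HasDerivAt (fun u:ℝ => 4 - 3*u^2) (0 - 3*(2*0^1)) 0 :=
    (hasDerivAt_const _ _).sub ((hasDerivAt_pow 2 0).const_mul 3)
  have h2 := h1.sqrt (by norm_num)
  convert h2 using 1
  · rfl
  norm_num

lemma hlR : HasDerivAt lRu (-1) 0 := by
  have h : HasDerivAt (fun u : ℝ => (u^2 - u * wFun u)/2)
      ((2*0^1 - (1 * wFun 0 + 0 * 0))/2) 0 :=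
    ((hasDerivAt_pow 2 0).sub ((hasDerivAt_id 0).mul hw)).div_const 2
  convert h using 1
  · rfl
  rw [wFun_zero]; norm_num

lemma hlP : HasDerivAt lPu 1 0 := by
  have h : HasDerivAt (fun u : ℝ => (u^2 + u * wFun u)/2)
      ((2*0^1 + (1 * wFun 0 + 0 * 0))/2) 0 :=
    ((hasDerivAt_pow 2 0).add ((hasDerivAt_id 0).mul hw)).div_const 2
  convert h using 1
  · rfl
  rw [wFun_zero]; norm_num

lemma haU : HasDerivAt aU (-1) 0 := by
  have hne : wFun 0 + 0 ≠ 0 := by rw [wFun_zero]; norm_num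
  have h : HasDerivAt (fun u : ℝ => (wFun u - u)/(wFun u + u))
      (((0 - 1) * (wFun 0 + 0) - (wFun 0 - 0) * (0 + 1)) / (wFun 0 + 0)^2) 0 :=
    (hw.sub (hasDerivAt_id 0)).div (hw.add (hasDerivAt_id 0)) hne
  convert h using 1
  · rfl
  rw [wFun_zero]; norm_num

noncomputable def Nn (n : ℕ) (u : ℝ) : ℝ :=
  (-1:ℝ)^(n+1) * (aU u)^n * (lPu u/(1 - lRu u)) + lPu u/(1 - lPu u)
noncomputable def Dn (n : ℕ) (u : ℝ) : ℝ :=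
  (-1:ℝ)^n * (aU u)^(n-1) * (1/(1 - lRu u)) + 1/(1 - lPu u)

lemma Nn_zero (n : ℕ) : Nn n 0 = 0 := by simp [Nn, lPu_zero]
lemma Dn_zero (n : ℕ) : Dn n 0 = (-1:ℝ)^n + 1 := by simp [Dn, aU_zero, lRu_zero, lPu_zero]

lemma hfrac1 : HasDerivAt (fun u => lPu u / (1 - lRu u)) 1 0 := by
  have hne : (1 : ℝ) - lRu 0 ≠ 0 := by rw [lRu_zero]; norm_num
  have h := hlP.div ((hasDerivAt_const (0:ℝ) (1:ℝ)).sub hlR) hne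
  convert h using 1
  · rfl
  · rfl
  · rfl
  simp only [Pi.add_apply, Pi.sub_apply, Pi.mul_apply, Pi.pow_apply]
  rw [lRu_zero, lPu_zero]; norm_num

lemma hfrac2 : HasDerivAt (fun u => lPu u / (1 - lPu u)) 1 0 := by
  have hne : (1 : ℝ) - lPu 0 ≠ 0 := by rw [lPu_zero]; norm_num
  have h := hlP.div ((hasDerivAt_const (0:ℝ) (1:ℝ)).sub hlP) hne
  convert h using 1
  · rfl
  · rfl
  · rfl
  simp only [Pi.add_apply, Pi.sub_apply, Pi.mul_apply, Pi.pow_apply]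
  rw [lPu_zero]; norm_num

lemma hfrac3 : HasDerivAt (fun u => 1 / (1 - lRu u)) (-1) 0 := by
  have hne : (1 : ℝ) - lRu 0 ≠ 0 := by rw [lRu_zero]; norm_num
  have h := (hasDerivAt_const (0:ℝ) (1:ℝ)).div ((hasDerivAt_const (0:ℝ) (1:ℝ)).sub hlR) hne
  convert h using 1
  · rfl
  · rfl
  · rfl
  simp only [Pi.add_apply, Pi.sub_apply, Pi.mul_apply, Pi.pow_apply]
  rw [lRu_zero]; norm_num

lemma hfrac4 : HasDerivAt (fun u => 1 / (1 - lPu u)) 1 0 := by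
  have hne : (1 : ℝ) - lPu 0 ≠ 0 := by rw [lPu_zero]; norm_num
  have h := (hasDerivAt_const (0:ℝ) (1:ℝ)).div ((hasDerivAt_const (0:ℝ) (1:ℝ)).sub hlP) hne
  convert h using 1
  · rfl
  · rfl
  · rfl
  simp only [Pi.add_apply, Pi.sub_apply, Pi.mul_apply, Pi.pow_apply]
  rw [lPu_zero]; norm_num

lemma hNd (n : ℕ) : HasDerivAt (Nn n) ((-1:ℝ)^(n+1) + 1) 0 := by
  have h := (((haU.pow n).mul hfrac1).const_mul ((-1:ℝ)^(n+1))).add hfrac2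
  convert h using 1
  · rfl
  · rfl
  · funext u; rw [Nn]; simp only [Pi.add_apply, Pi.sub_apply, Pi.mul_apply, Pi.pow_apply]; ring
  · simp only [Pi.add_apply, Pi.sub_apply, Pi.mul_apply, Pi.pow_apply]
    rw [aU_zero, lPu_zero, lRu_zero]; simp

lemma hDd (n : ℕ) (hn : 1 ≤ n) : HasDerivAt (Dn n) ((-1:ℝ)^n * (-(n:ℝ)) + 1) 0 := by
  have h := (((haU.pow (n-1)).mul hfrac3).const_mul ((-1:ℝ)^n)).add hfrac4
  convert h using 1
  · rfl
  · rfl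
  · funext u; rw [Dn]; simp only [Pi.add_apply, Pi.sub_apply, Pi.mul_apply, Pi.pow_apply]; ring
  · simp only [Pi.add_apply, Pi.sub_apply, Pi.mul_apply, Pi.pow_apply]
    rw [aU_zero, lRu_zero]
    have hc : ((n-1:ℕ):ℝ) = (n:ℝ) - 1 := by
      have := Nat.cast_sub hn (R := ℝ); simpa using this
    simp [hc]; ring

lemma gFun_eq (n : ℕ) {p : ℝ} (hp : p ∈ Ioo (0:ℝ) 1) :
    gFun p n = Nn n (Real.sqrt (1-p)) / Dn n (Real.sqrt (1-p)) := by
  obtain ⟨hp0, hp1⟩ := hp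
  set u := Real.sqrt (1-p) with hudef
  have hu0 : 0 < u := Real.sqrt_pos.mpr (by linarith)
  have hu2 : u^2 = 1 - p := Real.sq_sqrt (by linarith)
  have hu1 : u < 1 := by nlinarith
  have hw4 : 4 - 3*u^2 = 3*p + 1 := by rw [hu2]; ring
  have hwgt : u < wFun u := by
    have h1 : u^2 < 4 - 3*u^2 := by nlinarith
    have := Real.sqrt_lt_sqrt (sq_nonneg u) h1
    rwa [Real.sqrt_sq hu0.le] at this
  have hwpos : 0 < wFun u := lt_trans hu0 hwgt
  have hsqrt : Real.sqrt ((1-p)*(3*p+1)) = u * wFun u := by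
    rw [wFun, hw4, ← hu2, Real.sqrt_mul (sq_nonneg u), Real.sqrt_sq hu0.le]
  have hlR : lamR p = lRu u := by rw [lamR, lRu, hsqrt, hu2]
  have hlP : lamPF p = lPu u := by rw [lamPF, lPu, hsqrt, hu2]
  have hRneg : lRu u < 0 := by rw [lRu]; nlinarith
  have hPpos : 0 < lPu u := by rw [lPu]; nlinarith
  have hev : |evRatio p| = aU u := by
    rw [evRatio, hlR, hlP, abs_div, abs_of_neg hRneg, abs_of_pos hPpos, lRu, lPu, aU]
    rw [div_eq_div_iff (by nlinarith) (by nlinarith)]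
    ring
  rw [gFun, Nn, Dn, hev, hlR, hlP]

lemma husub : Tendsto (fun p : ℝ => Real.sqrt (1-p)) (nhdsWithin 1 (Ioo (0:ℝ) 1))
    (nhdsWithin 0 (Ioo (0:ℝ) 1)) := by
  rw [tendsto_nhdsWithin_iff]
  constructor
  · have h : Tendsto (fun p:ℝ => Real.sqrt (1-p)) (nhds 1) (nhds 0) := by
      have hc : Continuous (fun p:ℝ => Real.sqrt (1-p)) :=
        Real.continuous_sqrt.comp (continuous_const.sub continuous_id)
      simpa using hc.tendsto 1
    exact h.mono_left nhdsWithin_le_nhds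
  · filter_upwards [self_mem_nhdsWithin] with p hp
    refine ⟨Real.sqrt_pos.mpr (by linarith [hp.2]), ?_⟩
    have h2 : (Real.sqrt (1-p))^2 < 1 := by
      rw [Real.sq_sqrt (by linarith [hp.2])]; linarith [hp.1]
    nlinarith [Real.sqrt_nonneg (1-p)]

theorem gFun_limit_p_to_one (n : ℕ) (hn : 2 ≤ n) :
    (Odd n → Tendsto (fun p : ℝ => gFun p n) (nhdsWithin 1 (Ioo (0 : ℝ) 1))
        (nhds (2 / ((n : ℝ) + 1)))) ∧
    (Even n → Tendsto (fun p : ℝ => gFun p n) (nhdsWithin 1 (Ioo (0 : ℝ) 1)) (nhds 0)) := by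
  have heq : (fun p : ℝ => gFun p n) =ᶠ[nhdsWithin 1 (Ioo (0:ℝ) 1)]
      ((fun u => Nn n u / Dn n u) ∘ (fun p => Real.sqrt (1-p))) := by
    filter_upwards [self_mem_nhdsWithin] with p hp
    exact gFun_eq n hp
  have hle : nhdsWithin (0:ℝ) (Ioo (0:ℝ) 1) ≤ nhdsWithin 0 {(0:ℝ)}ᶜ :=
    nhdsWithin_mono 0 (fun x hx => ne_of_gt hx.1)
  constructor
  · intro hodd
    have hsgn1 : (-1:ℝ)^(n+1) = 1 := (hodd.add_one).neg_one_pow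
    have hsgn2 : (-1:ℝ)^n = -1 := hodd.neg_one_pow
    -- slope limits
    have hNt : Tendsto (fun u => Nn n u / u) (nhdsWithin 0 (Ioo (0:ℝ) 1)) (nhds 2) := by
      have h := hasDerivAt_iff_tendsto_slope.mp (hNd n)
      rw [hsgn1] at h; norm_num at h
      have h2 : Tendsto (slope (Nn n) 0) (nhdsWithin 0 (Ioo (0:ℝ) 1)) (nhds 2) :=
        h.mono_left hle
      refine h2.congr (fun u => ?_)
      simp [slope, Nn_zero, div_eq_inv_mul]
    have hDt : Tendsto (fun u => Dn n u / u) (nhdsWithin 0 (Ioo (0:ℝ) 1)) (nhds ((n:ℝ)+1)) := by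
      have h := hasDerivAt_iff_tendsto_slope.mp (hDd n (by omega))
      rw [hsgn2] at h; norm_num at h
      have h2 : Tendsto (slope (Dn n) 0) (nhdsWithin 0 (Ioo (0:ℝ) 1)) (nhds ((n:ℝ)+1)) :=
        h.mono_left hle
      refine h2.congr (fun u => ?_)
      simp [slope, Dn_zero, hsgn2, div_eq_inv_mul]
    have hnne : ((n:ℝ)+1) ≠ 0 := by positivity
    have hdiv := hNt.div hDt hnne
    have hmain : Tendsto (fun u => Nn n u / Dn n u) (nhdsWithin 0 (Ioo (0:ℝ) 1))
        (nhds (2/((n:ℝ)+1))) := by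
      refine hdiv.congr' ?_
      filter_upwards [self_mem_nhdsWithin] with u hu
      have hune : u ≠ 0 := ne_of_gt hu.1
      simp only [Pi.div_apply]
      rw [div_div_div_cancel_right₀ hune]
    rw [tendsto_congr' heq]
    exact hmain.comp husub
  · intro heven
    have hsgn2 : (-1:ℝ)^n = 1 := heven.neg_one_pow
    have hNc : ContinuousAt (Nn n) 0 := (hNd n).continuousAt
    have hDc : ContinuousAt (Dn n) 0 := (hDd n (by omega)).continuousAt
    have hDne : Dn n 0 ≠ 0 := by rw [Dn_zero, hsgn2]; norm_num
    have hmain : Tendsto (fun u => Nn n u / Dn n u) (nhdsWithin 0 (Ioo (0:ℝ) 1)) (nhds 0) := by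
      have h := (hNc.tendsto.div hDc.tendsto hDne).mono_left
        (nhdsWithin_le_nhds (s := Ioo (0:ℝ) 1))
      rwa [Nn_zero, zero_div] at h
    rw [tendsto_congr' heq]
    exact hmain.comp husub
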